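/- For every smooth f : ℝ^k × ℝ^k → ℝ and every point (p,ξ) ∈ ℝ^k × ℝ^k one has the identity Γ₂^Z(f)(p,ξ) = Σ_{i=1}^k Σ_{j=1}^k ( V_i(∂f/∂ξ_j)(p,ξ) )², where V_i acts in the p-variable; in particular Γ₂^Z(f) ≥ 0 everywhere. -/

import Mathlib

noncomputable section

abbrev Ek (k : ℕ) : Type := EuclideanSpace ℝ (Fin k)

/-- Action of a vector field `W` on a function `g`: `(Wg)(x) = ⟨W(x), ∇g(x)⟩ = dg_x(W(x))`. -/
def vAct {k : ℕ} (W : Ek k → Ek k) (g : Ek k → ℝ) (x : Ek k) : ℝ :=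
  fderiv ℝ g x (W x)

/-- The operator `L = ∑ V_i ∘ V_i + V_0`. -/
def opL {k : ℕ} (V₀ : Ek k → Ek k) (V : Fin k → Ek k → Ek k) (g : Ek k → ℝ) (x : Ek k) : ℝ :=
  ∑ i : Fin k, vAct (V i) (vAct (V i) g) x + vAct V₀ g x

/-- Carré du champ of an operator `A`. -/
def carre {X : Type*} (A : (X → ℝ) → X → ℝ) (g h : X → ℝ) (x : X) : ℝ :=
  (1 / 2) * (A (fun y => g y * h y) x - g x * A h x - h x * A g x)

/-- Iterated carré du champ of an operator `A`. -/
def carre2 {X : Type*} (A : (X → ℝ) → X → ℝ) (g : X → ℝ) (x : X) : ℝ :=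
  (1 / 2) * (A (carre A g g) x - 2 * carre A g (A g) x)

/-- Partial derivative `∂f/∂ξ_j` (in the second variable). -/
def dxi {k : ℕ} (j : Fin k) (f : Ek k × Ek k → ℝ) (x : Ek k × Ek k) : ℝ :=
  fderiv ℝ (fun ξ => f (x.1, ξ)) x.2 (EuclideanSpace.single j 1)

/-- The Kolmogorov type operator `𝓛 f(p,ξ) = (L f(·,ξ))(p) + ∑ j σ_j(p) ∂f/∂ξ_j (p,ξ)`. -/
def opLL {k : ℕ} (V₀ : Ek k → Ek k) (V : Fin k → Ek k → Ek k) (Sg : Ek k → Ek k)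
    (f : Ek k × Ek k → ℝ) (x : Ek k × Ek k) : ℝ :=
  opL V₀ V (fun p => f (p, x.2)) x.1 + ∑ j : Fin k, Sg x.1 j * dxi j f x

/-- The bilinear form `Γ^Z(f,h) = ⟨∇_ξ f, ∇_ξ h⟩`. -/
def gamZ {k : ℕ} (f h : Ek k × Ek k → ℝ) (x : Ek k × Ek k) : ℝ :=
  inner ℝ (gradient (fun ξ => f (x.1, ξ)) x.2) (gradient (fun ξ => h (x.1, ξ)) x.2)

/-- `Γ₂^Z(f) = (1/2)(𝓛(Γ^Z(f)) − 2Γ^Z(f, 𝓛f))`. -/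
def gamZ2 {k : ℕ} (V₀ : Ek k → Ek k) (V : Fin k → Ek k → Ek k) (Sg : Ek k → Ek k)
    (f : Ek k × Ek k → ℝ) (x : Ek k × Ek k) : ℝ :=
  (1 / 2) * (opLL V₀ V Sg (gamZ f f) x - 2 * gamZ f (opLL V₀ V Sg f) x)

variable {k : ℕ}

/-- directional derivative with variable direction field -/
def Dd (w : Ek k × Ek k → Ek k × Ek k) (g : Ek k × Ek k → ℝ) (x : Ek k × Ek k) : ℝ :=
  fderiv ℝ g x (w x)

-- smoothness of Dd
theorem Dd_smooth {w : Ek k × Ek k → Ek k × Ek k} {g : Ek k × Ek k → ℝ}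
    (hw : ContDiff ℝ (⊤ : ℕ∞) w) (hg : ContDiff ℝ (⊤ : ℕ∞) g) : ContDiff ℝ (⊤ : ℕ∞) (Dd w g) :=
  (hg.fderiv_right (by simp)).clm_apply hw

-- symmetry of second derivatives in constant directions
theorem Dd_symm {g : Ek k × Ek k → ℝ} (hg : ContDiff ℝ (⊤ : ℕ∞) g) (v w x : Ek k × Ek k) :
    fderiv ℝ (fun y => fderiv ℝ g y v) x w = fderiv ℝ (fun y => fderiv ℝ g y w) x v := by
  have hdg : Differentiable ℝ g := hg.differentiable (by simp)
  have hdg2 : DifferentiableAt ℝ (fderiv ℝ g) x :=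
    ((hg.fderiv_right (m := (⊤ : ℕ∞)) (by simp)).differentiable (by simp)).differentiableAt
  have key : ∀ v w : Ek k × Ek k,
      fderiv ℝ (fun y => fderiv ℝ g y v) x w = fderiv ℝ (fderiv ℝ g) x w v := by
    intro v w
    have : (fun y => fderiv ℝ g y v) = (ContinuousLinearMap.apply ℝ ℝ v) ∘ fderiv ℝ g :=
      rfl
    rw [this, fderiv_comp x (ContinuousLinearMap.apply ℝ ℝ v).differentiableAt hdg2]
    simp
  rw [key v w, key w v]
  exact second_derivative_symmetric (fun y => (hdg y).hasFDerivAt) hdg2.hasFDerivAt w v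

/-- p-direction field -/
def wp (W : Ek k → Ek k) : Ek k × Ek k → Ek k × Ek k := fun x => (W x.1, 0)

/-- ξ-direction (constant) -/
def wq (j : Fin k) : Ek k × Ek k → Ek k × Ek k := fun _ => (0, EuclideanSpace.single j 1)

theorem wp_smooth {W : Ek k → Ek k} (hW : ContDiff ℝ (⊤ : ℕ∞) W) : ContDiff ℝ (⊤ : ℕ∞) (wp W) :=
  (hW.comp contDiff_fst).prodMk contDiff_const

theorem wq_smooth (j : Fin k) : ContDiff ℝ (⊤ : WithTop ℕ∞) (wq (k := k) j) := contDiff_const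

-- restriction lemmas
theorem fderiv_restr_p {g : Ek k × Ek k → ℝ} {p ξ : Ek k} (hg : DifferentiableAt ℝ g (p, ξ))
    (v : Ek k) : fderiv ℝ (fun p' => g (p', ξ)) p v = fderiv ℝ g (p, ξ) (v, 0) := by
  have h1 : HasFDerivAt (fun p' : Ek k => (p', ξ)) (ContinuousLinearMap.inl ℝ (Ek k) (Ek k)) p :=
    hasFDerivAt_prodMk_left p ξ
  have := (hg.hasFDerivAt.comp p h1).fderiv
  rw [show (fun p' => g (p', ξ)) = g ∘ (fun p' => (p', ξ)) from rfl, this]; rfl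

theorem fderiv_restr_q {g : Ek k × Ek k → ℝ} {p ξ : Ek k} (hg : DifferentiableAt ℝ g (p, ξ))
    (v : Ek k) : fderiv ℝ (fun ξ' => g (p, ξ')) ξ v = fderiv ℝ g (p, ξ) (0, v) := by
  have h1 : HasFDerivAt (fun ξ' : Ek k => (p, ξ')) (ContinuousLinearMap.inr ℝ (Ek k) (Ek k)) ξ :=
    hasFDerivAt_prodMk_right p ξ
  have := (hg.hasFDerivAt.comp ξ h1).fderiv
  rw [show (fun ξ' => g (p, ξ')) = g ∘ (Prod.mk p) from rfl, this]; rfl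

theorem vAct_restr {W : Ek k → Ek k} {g : Ek k × Ek k → ℝ} {ξ : Ek k}
    (hg : Differentiable ℝ g) (p : Ek k) :
    vAct W (fun p' => g (p', ξ)) p = Dd (wp W) g (p, ξ) := by
  simp only [vAct, Dd, wp]
  exact fderiv_restr_p (hg _) _

theorem dxi_eq {g : Ek k × Ek k → ℝ} (hg : Differentiable ℝ g) (x : Ek k × Ek k) (j : Fin k) :
    dxi j g x = Dd (wq j) g x := by
  simp only [dxi, Dd, wq]
  exact fderiv_restr_q (p := x.1) (ξ := x.2) (hg _) _

-- product rule
theorem Dd_mul {w : Ek k × Ek k → Ek k × Ek k} {g h : Ek k × Ek k → ℝ}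
    (hg : Differentiable ℝ g) (hh : Differentiable ℝ h) (x : Ek k × Ek k) :
    Dd w (fun y => g y * h y) x = g x * Dd w h x + h x * Dd w g x := by
  simp only [Dd]
  rw [fderiv_fun_mul (hg x) (hh x)]
  simp [mul_comm]

-- sum rule
theorem Dd_sum {w : Ek k × Ek k → Ek k × Ek k} {n : ℕ} {F : Fin n → Ek k × Ek k → ℝ}
    (hF : ∀ j, Differentiable ℝ (F j)) (x : Ek k × Ek k) :
    Dd w (fun y => ∑ j : Fin n, F j y) x = ∑ j : Fin n, Dd w (F j) x := by
  simp only [Dd]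
  rw [fderiv_fun_sum (fun j _ => hF j x)]
  simp

-- commutation: wq with wq
theorem Dd_comm_qq {g : Ek k × Ek k → ℝ} (hg : ContDiff ℝ (⊤ : ℕ∞) g) (j m : Fin k) (x : Ek k × Ek k) :
    Dd (wq j) (Dd (wq m) g) x = Dd (wq m) (Dd (wq j) g) x := by
  simp only [Dd, wq]
  exact Dd_symm hg _ _ x

-- commutation: wq with wp
theorem Dd_comm_qp {W : Ek k → Ek k} {g : Ek k × Ek k → ℝ}
    (hW : ContDiff ℝ (⊤ : ℕ∞) W) (hg : ContDiff ℝ (⊤ : ℕ∞) g) (j : Fin k) (x : Ek k × Ek k) :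
    Dd (wq j) (Dd (wp W) g) x = Dd (wp W) (Dd (wq j) g) x := by
  show fderiv ℝ (fun y => fderiv ℝ g y (W y.1, 0)) x (0, EuclideanSpace.single j 1)
      = fderiv ℝ (fun y => fderiv ℝ g y (0, EuclideanSpace.single j 1)) x (W x.1, 0)
  have hdg2 : DifferentiableAt ℝ (fderiv ℝ g) x :=
    ((hg.fderiv_right (m := (⊤ : ℕ∞)) (by simp)).differentiable (by simp)).differentiableAt
  have hwd : DifferentiableAt ℝ (fun y : Ek k × Ek k => ((W y.1, 0) : Ek k × Ek k)) x :=
    ((wp_smooth hW).differentiable (by simp)).differentiableAt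
  rw [fderiv_clm_apply hdg2 hwd]
  have h2 : fderiv ℝ (fun y : Ek k × Ek k => ((W y.1, 0) : Ek k × Ek k)) x
      (0, EuclideanSpace.single j 1) = 0 := by
    have h3 : HasFDerivAt (fun y : Ek k × Ek k => ((W y.1, 0) : Ek k × Ek k))
        (((fderiv ℝ W x.1).comp (ContinuousLinearMap.fst ℝ (Ek k) (Ek k))).prod 0) x := by
      exact (((hW.differentiable (by simp) x.1).hasFDerivAt.comp x hasFDerivAt_fst)).prodMk
        (hasFDerivAt_const 0 x)
    rw [h3.fderiv]
    simp
  simp only [ContinuousLinearMap.add_apply, ContinuousLinearMap.flip_apply,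
    ContinuousLinearMap.comp_apply, h2, map_zero, add_zero]
  have key : ∀ v w : Ek k × Ek k,
      fderiv ℝ (fun y => fderiv ℝ g y v) x w = fderiv ℝ (fderiv ℝ g) x w v := by
    intro v w
    rw [show (fun y => fderiv ℝ g y v) = (ContinuousLinearMap.apply ℝ ℝ v) ∘ fderiv ℝ g from rfl,
      fderiv_comp x (ContinuousLinearMap.apply ℝ ℝ v).differentiableAt hdg2]
    simp
  rw [key]
  have := Dd_symm hg (W x.1, 0) (0, EuclideanSpace.single j 1) x
  rw [key, key] at this
  rw [zero_add]
  exact this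

-- derivative in ξ direction of a function of p only is zero
theorem Dd_wq_fst {Sg : Ek k → Ek k} (hSg : ContDiff ℝ (⊤ : ℕ∞) Sg) (m j : Fin k) (x : Ek k × Ek k) :
    Dd (wq j) (fun y => Sg y.1 m) x = 0 := by
  simp only [Dd, wq]
  have h3 : HasFDerivAt (fun y : Ek k × Ek k => Sg y.1 m)
      ((EuclideanSpace.proj m).comp (((fderiv ℝ Sg x.1).comp
        (ContinuousLinearMap.fst ℝ (Ek k) (Ek k))))) x := by
    exact (EuclideanSpace.proj m).hasFDerivAt.comp x
      (((hSg.differentiable (by simp) x.1).hasFDerivAt.comp x hasFDerivAt_fst))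
  rw [h3.fderiv]
  simp

-- gradient coordinates
theorem gamZ_coord (f h : Ek k × Ek k → ℝ) (x : Ek k × Ek k) :
    @inner ℝ _ _ (gradient (fun ξ => f (x.1, ξ)) x.2) (gradient (fun ξ => h (x.1, ξ)) x.2)
      = ∑ j : Fin k, dxi j f x * dxi j h x := by
  have key : ∀ (a : Ek k → ℝ) (b : Ek k) (j : Fin k),
      gradient a b j = fderiv ℝ a b (EuclideanSpace.single j 1) := by
    intro a b j
    have := InnerProductSpace.toDual_symm_apply (𝕜 := ℝ) (E := Ek k)
      (x := EuclideanSpace.single j 1) (y := fderiv ℝ a b)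
    rw [gradient]
    rw [← this]
    rw [PiLp.inner_apply]
    simp [EuclideanSpace.single_apply]
  rw [PiLp.inner_apply]
  apply Finset.sum_congr rfl
  intro j _
  simp [key, dxi, mul_comm]


variable {V₀ : Ek k → Ek k} {V : Fin k → Ek k → Ek k} {Sg : Ek k → Ek k}

-- gamZ in coordinates
theorem gamZ_eq (f h : Ek k × Ek k → ℝ) (x : Ek k × Ek k) :
    gamZ f h x = ∑ j : Fin k, dxi j f x * dxi j h x := gamZ_coord f h x

-- translation of opLL
theorem opLL_eq (hV₀ : ContDiff ℝ (⊤ : ℕ∞) V₀) (hV : ∀ i, ContDiff ℝ (⊤ : ℕ∞) (V i))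
    (hSg : ContDiff ℝ (⊤ : ℕ∞) Sg) {f : Ek k × Ek k → ℝ} (hf : ContDiff ℝ (⊤ : ℕ∞) f) (x : Ek k × Ek k) :
    opLL V₀ V Sg f x = ∑ i : Fin k, Dd (wp (V i)) (Dd (wp (V i)) f) x + Dd (wp V₀) f x
      + ∑ j : Fin k, Sg x.1 j * Dd (wq j) f x := by
  obtain ⟨p, ξ⟩ := x
  have hfd : Differentiable ℝ f := hf.differentiable (by simp)
  simp only [opLL, opL]
  congr 1
  · congr 1
    · apply Finset.sum_congr rfl
      intro i _
      have hDp : ContDiff ℝ (⊤ : ℕ∞) (Dd (wp (V i)) f) := Dd_smooth (wp_smooth (hV i)) hf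
      have e1 : vAct (V i) (fun p' => f (p', ξ)) = fun p' => Dd (wp (V i)) f (p', ξ) := by
        funext p'
        exact vAct_restr hfd p'
      rw [e1]
      exact vAct_restr (hDp.differentiable (by simp)) p
    · exact vAct_restr hfd p
  · apply Finset.sum_congr rfl
    intro j _
    rw [dxi_eq hfd]

-- addition rule
theorem Dd_add {w : Ek k × Ek k → Ek k × Ek k} {g h : Ek k × Ek k → ℝ}
    (hg : Differentiable ℝ g) (hh : Differentiable ℝ h) (x : Ek k × Ek k) :
    Dd w (fun y => g y + h y) x = Dd w g x + Dd w h x := by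
  simp only [Dd]
  rw [fderiv_fun_add (hg x) (hh x)]
  simp

-- the pure algebra lemma
theorem alg (n : ℕ) (a b d : Fin n → Fin n → ℝ) (c U s : Fin n → ℝ) :
    (1 / 2) * ((∑ i : Fin n, ∑ j : Fin n,
        ((U j * b i j + a i j * a i j) + (U j * b i j + a i j * a i j)))
      + (∑ j : Fin n, (U j * c j + U j * c j))
      + (∑ m : Fin n, s m * ∑ j : Fin n, (U j * d m j + U j * d m j))
      - 2 * ∑ j : Fin n, U j * ((∑ i : Fin n, b i j) + c j + ∑ m : Fin n, s m * d m j))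
    = ∑ i : Fin n, ∑ j : Fin n, (a i j) ^ 2 := by
  have E1 : (∑ i : Fin n, ∑ j : Fin n,
      ((U j * b i j + a i j * a i j) + (U j * b i j + a i j * a i j)))
      = 2 * (∑ i : Fin n, ∑ j : Fin n, U j * b i j)
        + 2 * (∑ i : Fin n, ∑ j : Fin n, a i j * a i j) := by
    simp only [Finset.sum_add_distrib]
    rw [two_mul, two_mul]
    abel
  have E2 : (∑ j : Fin n, (U j * c j + U j * c j)) = 2 * ∑ j : Fin n, U j * c j := by
    simp only [Finset.sum_add_distrib]
    rw [two_mul]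
  have E3 : (∑ m : Fin n, s m * ∑ j : Fin n, (U j * d m j + U j * d m j))
      = 2 * ∑ m : Fin n, ∑ j : Fin n, s m * (U j * d m j) := by
    conv_lhs => simp only [Finset.mul_sum, mul_add, Finset.sum_add_distrib]
    rw [two_mul]
  have E4 : (∑ j : Fin n, U j * ((∑ i : Fin n, b i j) + c j + ∑ m : Fin n, s m * d m j))
      = (∑ i : Fin n, ∑ j : Fin n, U j * b i j) + (∑ j : Fin n, U j * c j)
        + ∑ m : Fin n, ∑ j : Fin n, s m * (U j * d m j) := by
    simp only [mul_add, Finset.sum_add_distrib, Finset.mul_sum]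
    congr 1
    · congr 1
      exact Finset.sum_comm
    · rw [Finset.sum_comm]
      apply Finset.sum_congr rfl; intro m _
      apply Finset.sum_congr rfl; intro j _
      ring
  rw [E1, E2, E3, E4]
  simp only [pow_two]
  set A := ∑ i : Fin n, ∑ j : Fin n, a i j * a i j with hA
  set B := ∑ i : Fin n, ∑ j : Fin n, U j * b i j with hB
  set C := ∑ j : Fin n, U j * c j with hC
  set D := ∑ m : Fin n, ∑ j : Fin n, s m * (U j * d m j) with hD
  ring

/-- **Identity for `Γ₂^Z` and its nonnegativity.** For smooth `f`,
`Γ₂^Z(f)(p,ξ) = ∑ i ∑ j (V_i(∂f/∂ξ_j)(p,ξ))²` (with `V_i` acting in the `p`-variable);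
in particular `Γ₂^Z(f) ≥ 0`. -/
theorem gamZ2_eq_and_nonneg (k : ℕ) (hk : 1 ≤ k)
    (V₀ : Ek k → Ek k) (V : Fin k → Ek k → Ek k)
    (hV₀ : ContDiff ℝ (⊤ : ℕ∞) V₀) (hV : ∀ i, ContDiff ℝ (⊤ : ℕ∞) (V i))
    (Sg : Ek k → Ek k) (hSg : ContDiff ℝ (⊤ : ℕ∞) Sg)
    (f : Ek k × Ek k → ℝ) (hf : ContDiff ℝ (⊤ : ℕ∞) f) (p ξ : Ek k) :
    gamZ2 V₀ V Sg f (p, ξ) =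
      ∑ i : Fin k, ∑ j : Fin k, (vAct (V i) (fun p' => dxi j f (p', ξ)) p) ^ 2 ∧
    0 ≤ gamZ2 V₀ V Sg f (p, ξ) := by
  have hfd : Differentiable ℝ f := hf.differentiable (by simp)
  set u : Fin k → Ek k × Ek k → ℝ := fun j => Dd (wq j) f with hu
  have hus : ∀ j, ContDiff ℝ (⊤ : ℕ∞) (u j) := fun j => Dd_smooth ((wq_smooth j).of_le le_top) hf
  have hud : ∀ j, Differentiable ℝ (u j) := fun j => (hus j).differentiable (by simp)
  have hDif : ∀ i, ContDiff ℝ (⊤ : ℕ∞) (Dd (wp (V i)) f) := fun i => Dd_smooth (wp_smooth (hV i)) hf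
  have hDiu : ∀ i j, ContDiff ℝ (⊤ : ℕ∞) (Dd (wp (V i)) (u j)) := fun i j =>
    Dd_smooth (wp_smooth (hV i)) (hus j)
  have hDiud : ∀ i j, Differentiable ℝ (Dd (wp (V i)) (u j)) := fun i j =>
    (hDiu i j).differentiable (by simp)
  -- Γ in coordinates
  have hGam : gamZ f f = fun y => ∑ j : Fin k, u j y * u j y := by
    funext y
    rw [gamZ_eq]
    exact Finset.sum_congr rfl fun j _ => by rw [dxi_eq hfd]
  have hGs : ContDiff ℝ (⊤ : ℕ∞) (gamZ f f) := by
    rw [hGam]; exact ContDiff.sum fun j _ => (hus j).mul (hus j)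
  have hSgm : ∀ m, ContDiff ℝ (⊤ : ℕ∞) (fun y : Ek k × Ek k => Sg y.1 m) := by
    intro m
    have e : (fun y : Ek k × Ek k => Sg y.1 m)
        = (EuclideanSpace.proj (𝕜 := ℝ) m) ∘ Sg ∘ Prod.fst := rfl
    rw [e]
    exact (EuclideanSpace.proj (𝕜 := ℝ) m).contDiff.comp (hSg.comp contDiff_fst)
  -- 𝓛 f in coordinates
  have hLf : opLL V₀ V Sg f = fun y => ∑ i : Fin k, Dd (wp (V i)) (Dd (wp (V i)) f) y
      + Dd (wp V₀) f y + ∑ m : Fin k, Sg y.1 m * u m y := by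
    funext y; exact opLL_eq hV₀ hV hSg hf y
  have hLfs : ContDiff ℝ (⊤ : ℕ∞) (opLL V₀ V Sg f) := by
    rw [hLf]
    exact ((ContDiff.sum fun i _ => Dd_smooth (wp_smooth (hV i)) (hDif i)).add
      (Dd_smooth (wp_smooth hV₀) hf)).add (ContDiff.sum fun m _ => (hSgm m).mul (hus m))
  -- first derivative of Γ in a direction field
  have dGam : ∀ w : Ek k × Ek k → Ek k × Ek k, Dd w (gamZ f f)
      = fun y => ∑ j : Fin k, (u j y * Dd w (u j) y + u j y * Dd w (u j) y) := by
    intro w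
    funext y
    rw [hGam, Dd_sum (fun j => (hud j).fun_mul (hud j))]
    exact Finset.sum_congr rfl fun j _ => Dd_mul (hud j) (hud j) y
  -- second derivative of Γ in the fields V i
  have d2Gam : ∀ i, Dd (wp (V i)) (Dd (wp (V i)) (gamZ f f)) (p, ξ)
      = ∑ j : Fin k, ((u j (p, ξ) * Dd (wp (V i)) (Dd (wp (V i)) (u j)) (p, ξ)
          + Dd (wp (V i)) (u j) (p, ξ) * Dd (wp (V i)) (u j) (p, ξ))
        + (u j (p, ξ) * Dd (wp (V i)) (Dd (wp (V i)) (u j)) (p, ξ)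
          + Dd (wp (V i)) (u j) (p, ξ) * Dd (wp (V i)) (u j) (p, ξ))) := by
    intro i
    rw [dGam (wp (V i))]
    rw [Dd_sum (fun j => ((hud j).fun_mul (hDiud i j)).fun_add ((hud j).fun_mul (hDiud i j)))]
    apply Finset.sum_congr rfl
    intro j _
    rw [Dd_add ((hud j).fun_mul (hDiud i j)) ((hud j).fun_mul (hDiud i j)),
      Dd_mul (hud j) (hDiud i j)]
  -- ξ-derivative of 𝓛 f
  have dL : ∀ j, Dd (wq j) (opLL V₀ V Sg f) (p, ξ)
      = (∑ i : Fin k, Dd (wp (V i)) (Dd (wp (V i)) (u j)) (p, ξ))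
        + Dd (wp V₀) (u j) (p, ξ)
        + ∑ m : Fin k, Sg p m * Dd (wq m) (u j) (p, ξ) := by
    intro j
    rw [hLf]
    rw [Dd_add (g := fun y => ∑ i : Fin k, Dd (wp (V i)) (Dd (wp (V i)) f) y + Dd (wp V₀) f y)
      (h := fun y => ∑ m : Fin k, Sg y.1 m * u m y)
      ((Differentiable.fun_sum fun i _ => (Dd_smooth (wp_smooth (hV i))
          (hDif i)).differentiable (by simp)).add ((Dd_smooth (wp_smooth hV₀) hf).differentiable (by simp)))
      ((Differentiable.fun_sum fun m _ => ((hSgm m).mul (hus m)).differentiable (by simp)))]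
    rw [Dd_add (g := fun y => ∑ i : Fin k, Dd (wp (V i)) (Dd (wp (V i)) f) y)
      (h := Dd (wp V₀) f)
      (Differentiable.fun_sum fun i _ => (Dd_smooth (wp_smooth (hV i))
          (hDif i)).differentiable (by simp))
      ((Dd_smooth (wp_smooth hV₀) hf).differentiable (by simp))]
    congr 1
    · congr 1
      · rw [Dd_sum (fun i => (Dd_smooth (wp_smooth (hV i)) (hDif i)).differentiable (by simp))]
        apply Finset.sum_congr rfl
        intro i _
        rw [Dd_comm_qp (hV i) (hDif i) j (p, ξ)]
        congr 1
        funext y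
        exact Dd_comm_qp (hV i) hf j y
      · exact Dd_comm_qp hV₀ hf j (p, ξ)
    · rw [Dd_sum (fun m => ((hSgm m).mul (hus m)).differentiable (by simp))]
      apply Finset.sum_congr rfl
      intro m _
      rw [Dd_mul (g := fun y => Sg y.1 m) (h := u m)
        ((hSgm m).differentiable (by simp)) (hud m)]
      rw [Dd_wq_fst hSg m j (p, ξ), mul_zero, add_zero]
      rw [Dd_comm_qq hf m j (p, ξ)]
  -- the two pieces of Γ₂
  have hA : opLL V₀ V Sg (gamZ f f) (p, ξ)
      = (∑ i : Fin k, ∑ j : Fin k, ((u j (p, ξ) * Dd (wp (V i)) (Dd (wp (V i)) (u j)) (p, ξ)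
            + Dd (wp (V i)) (u j) (p, ξ) * Dd (wp (V i)) (u j) (p, ξ))
          + (u j (p, ξ) * Dd (wp (V i)) (Dd (wp (V i)) (u j)) (p, ξ)
            + Dd (wp (V i)) (u j) (p, ξ) * Dd (wp (V i)) (u j) (p, ξ))))
        + (∑ j : Fin k, (u j (p, ξ) * Dd (wp V₀) (u j) (p, ξ)
            + u j (p, ξ) * Dd (wp V₀) (u j) (p, ξ)))
        + ∑ m : Fin k, Sg p m * ∑ j : Fin k, (u j (p, ξ) * Dd (wq m) (u j) (p, ξ)
            + u j (p, ξ) * Dd (wq m) (u j) (p, ξ)) := by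
    rw [opLL_eq hV₀ hV hSg hGs (p, ξ)]
    congr 1
    · congr 1
      · exact Finset.sum_congr rfl fun i _ => d2Gam i
      · exact congrFun (dGam (wp V₀)) (p, ξ)
    · exact Finset.sum_congr rfl fun m _ => by rw [congrFun (dGam (wq m)) (p, ξ)]
  have hB : gamZ f (opLL V₀ V Sg f) (p, ξ)
      = ∑ j : Fin k, u j (p, ξ) * ((∑ i : Fin k, Dd (wp (V i)) (Dd (wp (V i)) (u j)) (p, ξ))
          + Dd (wp V₀) (u j) (p, ξ)
          + ∑ m : Fin k, Sg p m * Dd (wq m) (u j) (p, ξ)) := by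
    rw [gamZ_eq]
    apply Finset.sum_congr rfl
    intro j _
    rw [dxi_eq hfd, dxi_eq (hLfs.differentiable (by simp)), dL j]
  -- the right hand side
  have hrhs : ∀ i j, vAct (V i) (fun p' => dxi j f (p', ξ)) p = Dd (wp (V i)) (u j) (p, ξ) := by
    intro i j
    have e : (fun p' => dxi j f (p', ξ)) = fun p' => u j (p', ξ) :=
      funext fun p' => dxi_eq hfd (p', ξ) j
    rw [e]
    exact vAct_restr (hud j) p
  have main : gamZ2 V₀ V Sg f (p, ξ)
      = ∑ i : Fin k, ∑ j : Fin k, (vAct (V i) (fun p' => dxi j f (p', ξ)) p) ^ 2 := by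
    rw [gamZ2, hA, hB]
    have := alg k (fun i j => Dd (wp (V i)) (u j) (p, ξ))
      (fun i j => Dd (wp (V i)) (Dd (wp (V i)) (u j)) (p, ξ))
      (fun m j => Dd (wq m) (u j) (p, ξ))
      (fun j => Dd (wp V₀) (u j) (p, ξ)) (fun j => u j (p, ξ)) (fun m => Sg p m)
    rw [this]
    exact Finset.sum_congr rfl fun i _ => Finset.sum_congr rfl fun j _ => by rw [hrhs i j]
  refine ⟨main, ?_⟩
  rw [main]
  exact Finset.sum_nonneg fun i _ => Finset.sum_nonneg fun j _ => sq_nonneg _
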